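/- arXiv:1612.05011 — 2 statements merged into one kernel-verified Lean document; each statement's English description precedes it below -/
import Mathlib

section
/- Let T be a compact operator on a Hilbert space H with Hilbert (orthonormal) basis (e_j)_{j∈J}, J countable. For every finite subset I ⊂ J with #I = n, the (n+1)-st singular value of T satisfies μ_{n+1}(T) ≤ ∑_{j∈J∖I} ‖T e_j‖. -/
/-!
Take `F` in the min-max formula to be the span of the `e i`, `i ∈ I`. A unit vector `w ⊥ F` has
Fourier coefficients `⟪e j, w⟫` of modulus at most `1`, supported off `I`, so expanding `T w` along
the basis gives `‖T w‖ ≤ ∑_{j ∉ I} ‖T e_j‖`. Finally `re ⟪S w, w⟫ ≤ ‖S w‖ = ‖T w‖`, the equality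
because `S` is self-adjoint with `S² = T* T`.
-/
open scoped InnerProductSpace ENNReal

namespace ContinuousLinearMap

variable {𝕜 E F : Type*} [RCLike 𝕜] [NormedAddCommGroup E] [InnerProductSpace 𝕜 E]
  [NormedAddCommGroup F] [InnerProductSpace 𝕜 F] [CompleteSpace E] [CompleteSpace F]

theorem norm_apply_eq_of_comp_self_eq_adjoint_comp {S : E →L[𝕜] E} {T : E →L[𝕜] F}
    (hS : IsSelfAdjoint S) (hST : S ∘L S = adjoint T ∘L T) (x : E) : ‖S x‖ = ‖T x‖ := by
  rw [apply_norm_eq_sqrt_inner_adjoint_left, apply_norm_eq_sqrt_inner_adjoint_left,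
    hS.adjoint_eq, hST]

end ContinuousLinearMap

namespace HilbertBasis

variable {ι 𝕜 E F : Type*} [RCLike 𝕜] [NormedAddCommGroup E] [InnerProductSpace 𝕜 E]
  [NormedAddCommGroup F] [InnerProductSpace 𝕜 F]

theorem finrank_span_finset (e : HilbertBasis ι 𝕜 E) (I : Finset ι) :
    Module.finrank 𝕜 (Submodule.span 𝕜 (Set.range fun i : I => e i)) = I.card :=
  (finrank_span_eq_card (e.orthonormal.comp _ Subtype.val_injective).linearIndependent).trans
    (Fintype.card_coe I)

theorem enorm_apply_le_mul_tsum_enorm_apply (e : HilbertBasis ι 𝕜 E) (T : E →L[𝕜] F)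
    {p : ι → Prop} {w : E} (hw : ∀ i, ¬ p i → ⟪e i, w⟫_𝕜 = 0) :
    ‖T w‖ₑ ≤ ‖w‖ₑ * ∑' j : {j // p j}, ‖T (e j)‖ₑ := by
  have hTw : HasSum (fun j : {j // p j} => ⟪e j, w⟫_𝕜 • T (e j)) (T w) := by
    refine (hasSum_subtype_iff_of_support_subset (f := fun i => ⟪e i, w⟫_𝕜 • T (e i))
      (s := {j | p j}) fun i hi => ?_).mpr ?_
    · by_contra hpi
      exact hi (by simp [hw i hpi])
    · simpa [e.repr_apply_apply] using (e.hasSum_repr w).mapL T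
  rw [← ENNReal.tsum_mul_left]
  refine hTw.enorm_le_of_bounded ENNReal.summable.hasSum fun j => ?_
  rw [enorm_smul]
  gcongr
  rw [← ofReal_norm, ← ofReal_norm]
  exact ENNReal.ofReal_le_ofReal <|
    (norm_inner_le_norm _ _).trans_eq (by rw [e.orthonormal.1 j, one_mul])

end HilbertBasis

section MinMax

variable {𝕜 E : Type*} [RCLike 𝕜] [NormedAddCommGroup E] [InnerProductSpace 𝕜 E]

theorem ContinuousLinearMap.IsPositive.iInf_iSup_re_inner_le {S : E →L[𝕜] E} (hS : S.IsPositive)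
    (F₀ : Submodule 𝕜 E) {r : ℝ} (hr : 0 ≤ r)
    (h : ∀ w : E, ‖w‖ = 1 → (∀ v ∈ F₀, ⟪v, w⟫_𝕜 = 0) → RCLike.re ⟪S w, w⟫_𝕜 ≤ r) :
    ⨅ F : {F : Submodule 𝕜 E // Module.finrank 𝕜 F = Module.finrank 𝕜 F₀},
      ⨆ w : {w : E // ‖w‖ = 1 ∧ ∀ v ∈ F.val, ⟪v, w⟫_𝕜 = 0}, RCLike.re ⟪S w.val, w.val⟫_𝕜 ≤ r := by
  have hbdd : BddBelow (Set.range
      fun F : {F : Submodule 𝕜 E // Module.finrank 𝕜 F = Module.finrank 𝕜 F₀} =>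
      ⨆ w : {w : E // ‖w‖ = 1 ∧ ∀ v ∈ F.val, ⟪v, w⟫_𝕜 = 0}, RCLike.re ⟪S w.val, w.val⟫_𝕜) :=
    ⟨0, Set.forall_mem_range.2 fun F => Real.iSup_nonneg fun w => hS.re_inner_nonneg_left w⟩
  exact ciInf_le_of_le hbdd ⟨F₀, rfl⟩ (Real.iSup_le (fun w => h w.1 w.2.1 w.2.2) hr)

end MinMax

theorem stmt_3_general {H : Type*} [NormedAddCommGroup H] [InnerProductSpace ℂ H] [CompleteSpace H]
    {J : Type*} (e : HilbertBasis J ℂ H)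
    (T S : H →L[ℂ] H)
    (hSpos : S.IsPositive) (hS2 : S.comp S = (ContinuousLinearMap.adjoint T).comp T)
    (μ : ℕ → ℝ)
    (hμ : ∀ k : ℕ, μ (k + 1) =
      ⨅ F : {F : Submodule ℂ H // Module.finrank ℂ F = k},
        ⨆ w : {w : H // ‖w‖ = 1 ∧ ∀ v ∈ F.val, ⟪v, w⟫_ℂ = 0},
          (⟪S w.val, w.val⟫_ℂ).re)
    (n : ℕ) (I : Finset J) (hI : I.card = n) :
    ENNReal.ofReal (μ (n + 1)) ≤ ∑' j : {j : J // j ∉ I}, (‖T (e j.val)‖₊ : ℝ≥0∞) := by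
  set r := ∑' j : {j : J // j ∉ I}, (‖T (e j.val)‖₊ : ℝ≥0∞)
  by_cases htop : r = ⊤
  · simp [htop]
  set F₀ := Submodule.span ℂ (Set.range fun i : I => e i)
  have hμn : μ (n + 1) ≤ r.toReal := by
    rw [hμ n, ← hI, ← e.finrank_span_finset I]
    refine hSpos.iInf_iSup_re_inner_le F₀ ENNReal.toReal_nonneg fun w hw hwF₀ => ?_
    have hTw : ‖T w‖ₑ ≤ r := by
      have hw' : ‖w‖ₑ = 1 := by rw [← ofReal_norm, hw, ENNReal.ofReal_one]
      refine (e.enorm_apply_le_mul_tsum_enorm_apply T (p := (· ∉ I)) fun i hi =>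
        hwF₀ (e i) (Submodule.subset_span ⟨⟨i, not_not.1 hi⟩, rfl⟩)).trans_eq ?_
      rw [hw', one_mul]
      rfl
    calc RCLike.re ⟪S w, w⟫_ℂ ≤ ‖S w‖ * ‖w‖ := re_inner_le_norm _ _
      _ = ‖T w‖ := by
        rw [ContinuousLinearMap.norm_apply_eq_of_comp_self_eq_adjoint_comp hSpos.isSelfAdjoint hS2,
          hw, mul_one]
      _ ≤ r.toReal := (ENNReal.ofReal_le_iff_le_toReal htop).1 (by rwa [ofReal_norm])
  exact (ENNReal.ofReal_le_ofReal hμn).trans ENNReal.ofReal_toReal_le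

/-- Singular value bound: if `(e j)` is a Hilbert basis of `H`, `T` is compact,
`S = √(T*T)` (i.e. `S` positive with `S² = T*T`), and `μ` is the singular value
sequence of `T` given by the min-max principle, then for any finite `I ⊆ J` with
`#I = n` we have `μ (n+1) ≤ ∑_{j ∉ I} ‖T e_j‖`. -/
theorem stmt_3 {H : Type*} [NormedAddCommGroup H] [InnerProductSpace ℂ H] [CompleteSpace H]
    {J : Type*} [Countable J] (e : HilbertBasis J ℂ H)
    (T S : H →L[ℂ] H) (hT : IsCompactOperator T)
    (hSpos : S.IsPositive) (hS2 : S.comp S = (ContinuousLinearMap.adjoint T).comp T)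
    (μ : ℕ → ℝ)
    (hμ : ∀ k : ℕ, μ (k + 1) =
      ⨅ F : {F : Submodule ℂ H // Module.finrank ℂ F = k},
        ⨆ w : {w : H // ‖w‖ = 1 ∧ ∀ v ∈ F.val, ⟪v, w⟫_ℂ = 0},
          (⟪S w.val, w.val⟫_ℂ).re)
    (n : ℕ) (I : Finset J) (hI : I.card = n) :
    ENNReal.ofReal (μ (n + 1)) ≤ ∑' j : {j : J // j ∉ I}, (‖T (e j.val)‖₊ : ℝ≥0∞) :=
  stmt_3_general e T S hSpos hS2 μ hμ n I hI
end

section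
/- Let (Y_α)_{α∈ℤ², |α|≥2} be real Gaussian random variables with mean 0 and variances σ²(α) ≥ C·|α|² for some C > 0, where |α| = |α₁| + |α₂|. Then P(⋂_{m₀≥1} ⋃_{|α|≥2} {|Y_α| < |α|^{−m₀}}) = 0; i.e., almost surely there exists m₀ such that |Y_α| ≥ |α|^{−m₀} for all α with |α| ≥ 2. -/
open MeasureTheory ProbabilityTheory Real Filter Topology

/-
A union bound over `α` together with the Gaussian small-ball estimate
`P(|Y_α| < t) ≤ 2t / √(2πσ²(α))` bounds the probability of the event for a fixed `m₀` by
`K ∑_α |α|^{-m₀}`, with `K` independent of `m₀` because the variances are bounded below.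
Since `|α| ≥ 2` and `∑_α |α|^{-3} < ∞`, dominated convergence sends these sums to `0` as
`m₀ → ∞`.
-/

lemma gaussianPDFReal_le_inv_sqrt (μ : ℝ) (v : NNReal) (x : ℝ) :
    gaussianPDFReal μ v x ≤ (√(2 * π * v))⁻¹ := by
  refine mul_le_of_le_one_right (by positivity) (exp_le_one_iff.mpr ?_)
  exact div_nonpos_of_nonpos_of_nonneg (neg_nonpos.mpr (sq_nonneg _)) (by positivity)

lemma gaussianReal_le_ofReal_mul_volume (μ : ℝ) {v : NNReal} (hv : v ≠ 0) (s : Set ℝ) :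
    gaussianReal μ v s ≤ ENNReal.ofReal (√(2 * π * v))⁻¹ * volume s := by
  rw [gaussianReal_apply μ hv]
  calc ∫⁻ x in s, gaussianPDF μ v x ≤ ∫⁻ _ in s, ENNReal.ofReal (√(2 * π * v))⁻¹ :=
        lintegral_mono fun x => ENNReal.ofReal_le_ofReal (gaussianPDFReal_le_inv_sqrt μ v x)
    _ = ENNReal.ofReal (√(2 * π * v))⁻¹ * volume s := setLIntegral_const s _

lemma measure_abs_sub_lt_le_of_map_eq_gaussianReal {Ω : Type*} [MeasurableSpace Ω]
    {P : Measure Ω} {X : Ω → ℝ} {μ : ℝ} {v : NNReal} (hX : P.map X = gaussianReal μ v)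
    (hv : v ≠ 0) (t : ℝ) :
    P {ω | |X ω - μ| < t} ≤ ENNReal.ofReal (2 * t / √(2 * π * v)) := by
  have hXm : AEMeasurable X P := aemeasurable_of_map_neZero (by rw [hX]; infer_instance)
  have hball : {ω | |X ω - μ| < t} = X ⁻¹' Metric.ball μ t := by
    ext ω; simp [Real.dist_eq]
  rw [hball, ← Measure.map_apply_of_aemeasurable hXm Metric.isOpen_ball.measurableSet, hX]
  calc gaussianReal μ v (Metric.ball μ t)
      ≤ ENNReal.ofReal (√(2 * π * v))⁻¹ * volume (Metric.ball μ t) :=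
        gaussianReal_le_ofReal_mul_volume μ hv _
    _ = ENNReal.ofReal (2 * t / √(2 * π * v)) := by
        rw [Real.volume_ball, ← ENNReal.ofReal_mul (by positivity), inv_mul_eq_div]

lemma summable_abs_add_abs_zpow_neg {m : ℕ} (hm : 2 < m) :
    Summable fun α : ℤ × ℤ => ((|α.1| + |α.2| : ℤ) : ℝ) ^ (-(m : ℤ)) := by
  have hnorm := (finTwoArrowEquiv ℤ).symm.summable_iff.mpr
    (EisensteinSeries.summable_one_div_norm_rpow (k := m) (by exact_mod_cast hm))
  refine hnorm.of_nonneg_of_le (fun α => zpow_nonneg (by positivity) _) fun ⟨a, b⟩ => ?_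
  set x := (finTwoArrowEquiv ℤ).symm (a, b)
  rcases eq_or_ne x 0 with hx | hx
  · obtain ⟨rfl, rfl⟩ : a = 0 ∧ b = 0 := by simpa [x] using hx
    simp [zero_pow (show m ≠ 0 by omega)]
  have hle : ‖x‖ ≤ ((|a| + |b| : ℤ) : ℝ) := by
    push_cast
    refine pi_norm_le_iff_of_nonneg (by positivity) |>.mpr fun i => ?_
    fin_cases i <;> simp [x, Int.norm_eq_abs]
  change _ ≤ ‖x‖ ^ (-(m : ℝ))
  rw [zpow_neg, zpow_natCast, Real.rpow_neg (norm_nonneg x), Real.rpow_natCast]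
  exact inv_anti₀ (pow_pos (norm_pos_iff.mpr hx) m) (pow_le_pow_left₀ (norm_nonneg x) hle m)

lemma tendsto_tsum_zpow_neg_atTop_zero {ι : Type*} {N : ι → ℝ} (hN : ∀ i, 1 < N i) {m₀ : ℕ}
    (hsum : Summable fun i => N i ^ (-(m₀ : ℤ))) :
    Tendsto (fun m : ℕ => ∑' i, N i ^ (-(m : ℤ))) atTop (𝓝 0) := by
  have hlim : ∀ i, Tendsto (fun m : ℕ => N i ^ (-(m : ℤ))) atTop (𝓝 0) := fun i => by
    simp_rw [zpow_neg, zpow_natCast, ← inv_pow]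
    exact tendsto_pow_atTop_nhds_zero_of_lt_one (inv_nonneg.mpr (zero_le_one.trans (hN i).le))
      (inv_lt_one_of_one_lt₀ (hN i))
  simpa using tendsto_tsum_of_dominated_convergence hsum hlim <| by
    filter_upwards [eventually_ge_atTop m₀] with m hm i
    rw [Real.norm_of_nonneg (zpow_nonneg (zero_le_one.trans (hN i).le) _)]
    exact zpow_le_zpow_right₀ (hN i).le (by omega)

lemma measure_iInter_iUnion_eq_zero_of_le_zpow {Ω ι : Type*} [MeasurableSpace Ω] [Countable ι]
    {P : Measure Ω} {A : ℕ → ι → Set Ω} {N : ι → ℝ} (hN : ∀ i, 1 < N i) {m₀ : ℕ}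
    (hsum : Summable fun i => N i ^ (-(m₀ : ℤ))) {K : ℝ} (hK : 0 ≤ K)
    (hA : ∀ m i, P (A m i) ≤ ENNReal.ofReal (K * N i ^ (-(m : ℤ)))) :
    P (⋂ m, ⋂ (_ : 1 ≤ m), ⋃ i, A m i) = 0 := by
  have hbound : ∀ᶠ m : ℕ in atTop,
      P (⋂ m, ⋂ (_ : 1 ≤ m), ⋃ i, A m i) ≤ ENNReal.ofReal (K * ∑' i, N i ^ (-(m : ℤ))) := by
    filter_upwards [eventually_ge_atTop (max 1 m₀)] with m hm
    have hsum_m : Summable fun i => N i ^ (-(m : ℤ)) :=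
      hsum.of_nonneg_of_le (fun i => zpow_nonneg (zero_le_one.trans (hN i).le) _)
        fun i => zpow_le_zpow_right₀ (hN i).le (by omega)
    calc P (⋂ m, ⋂ (_ : 1 ≤ m), ⋃ i, A m i) ≤ P (⋃ i, A m i) :=
          measure_mono (Set.iInter₂_subset m (le_of_max_le_left hm))
      _ ≤ ∑' i, P (A m i) := measure_iUnion_le _
      _ ≤ ∑' i, ENNReal.ofReal (K * N i ^ (-(m : ℤ))) := ENNReal.tsum_le_tsum (hA m)
      _ = ENNReal.ofReal (K * ∑' i, N i ^ (-(m : ℤ))) := by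
        rw [← tsum_mul_left, ENNReal.ofReal_tsum_of_nonneg
          (fun i => mul_nonneg hK (zpow_nonneg (zero_le_one.trans (hN i).le) _))
          (hsum_m.mul_left K)]
  have hlim := ENNReal.tendsto_ofReal ((tendsto_tsum_zpow_neg_atTop_zero hN hsum).const_mul K)
  simpa using ge_of_tendsto hlim hbound

theorem stmt_11_general {Ω : Type*} [MeasurableSpace Ω] (P : Measure Ω)
    (Y : {α : ℤ × ℤ // 2 ≤ |α.1| + |α.2|} → Ω → ℝ)
    (v : {α : ℤ × ℤ // 2 ≤ |α.1| + |α.2|} → NNReal) (C : ℝ) (hC : 0 < C)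
    (hY : ∀ α, Measure.map (Y α) P = gaussianReal 0 (v α))
    (hv : ∀ α, C * ((|α.val.1| + |α.val.2| : ℤ) : ℝ) ^ 2 ≤ (v α : ℝ)) :
    P (⋂ m₀ : ℕ, ⋂ (_ : 1 ≤ m₀), ⋃ α : {α : ℤ × ℤ // 2 ≤ |α.1| + |α.2|},
        {ω | |Y α ω| < ((|α.val.1| + |α.val.2| : ℤ) : ℝ) ^ (-(m₀ : ℤ))}) = 0 := by
  set N : {α : ℤ × ℤ // 2 ≤ |α.1| + |α.2|} → ℝ := fun α => ((|α.val.1| + |α.val.2| : ℤ) : ℝ)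
  have hN : ∀ α, 2 ≤ N α := fun α => by simpa [N] using (Int.cast_le (R := ℝ)).mpr α.2
  have hCv : ∀ α, C ≤ v α := fun α =>
    (le_mul_of_one_le_right hC.le (by nlinarith [hN α])).trans (hv α)
  refine measure_iInter_iUnion_eq_zero_of_le_zpow (fun α => by linarith [hN α])
    ((summable_abs_add_abs_zpow_neg (m := 3) (by norm_num)).comp_injective Subtype.val_injective)
    (K := 2 / √(2 * π * C)) (by positivity) fun m α => ?_
  have hv0 : v α ≠ 0 := by
    rw [← NNReal.coe_ne_zero]; exact (hC.trans_le (hCv α)).ne'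
  calc P {ω | |Y α ω| < N α ^ (-(m : ℤ))}
      ≤ ENNReal.ofReal (2 * N α ^ (-(m : ℤ)) / √(2 * π * v α)) := by
        simpa using measure_abs_sub_lt_le_of_map_eq_gaussianReal (hY α) hv0 (N α ^ (-(m : ℤ)))
    _ ≤ ENNReal.ofReal (2 / √(2 * π * C) * N α ^ (-(m : ℤ))) := by
        rw [div_mul_eq_mul_div]
        refine ENNReal.ofReal_le_ofReal (div_le_div_of_nonneg_left ?_ (by positivity) ?_)
        · exact mul_nonneg zero_le_two (zpow_nonneg (by linarith [hN α]) _)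
        · exact Real.sqrt_le_sqrt (by gcongr; exact hCv α)

/-- If `(Y_α)_{|α|≥2}` are centered real Gaussians with variances `σ²(α) ≥ C|α|²`, then
almost surely the vector of values is Diophantine: the event that for every `m₀ ≥ 1`
some `α` with `|α| ≥ 2` has `|Y_α| < |α|^{-m₀}` is a null event. -/
theorem stmt_11 {Ω : Type*} [MeasurableSpace Ω] (P : Measure Ω) [IsProbabilityMeasure P]
    (Y : {α : ℤ × ℤ // 2 ≤ |α.1| + |α.2|} → Ω → ℝ)
    (v : {α : ℤ × ℤ // 2 ≤ |α.1| + |α.2|} → NNReal) (C : ℝ) (hC : 0 < C)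
    (hY : ∀ α, Measure.map (Y α) P = gaussianReal 0 (v α))
    (hv : ∀ α, C * ((|α.val.1| + |α.val.2| : ℤ) : ℝ) ^ 2 ≤ (v α : ℝ)) :
    P (⋂ m₀ : ℕ, ⋂ (_ : 1 ≤ m₀), ⋃ α : {α : ℤ × ℤ // 2 ≤ |α.1| + |α.2|},
        {ω | |Y α ω| < ((|α.val.1| + |α.val.2| : ℤ) : ℝ) ^ (-(m₀ : ℤ))}) = 0 :=
  stmt_11_general P Y v C hC hY hv
end
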